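/- arXiv:2509.18389 — 3 statements merged into one kernel-verified Lean document; each statement's English description precedes it below -/
import Mathlib

section
/- (Lemma 4) For every L ≥ 0, ‖v − w_L‖_∞ ≤ γ^L ‖v‖_∞. In particular, for every query index ω ∈ {1,…,n}, the difference between the expected Monte Carlo return (which equals v_ω) and the depth-L Transformer output with TD parameters satisfies |v_ω − TF_L(Z_0(ω); θ_L^TD)| ≤ γ^L ‖v‖_∞. -/
open Matrix Filter Topology

noncomputable section

/-- Index type for `2n` rows (two stacked copies of the feature dimension). -/
abbrev TwoN (n : ℕ) := Fin n ⊕ Fin n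
/-- Row index type for prompts: `2n + 1`. -/
abbrev RIdx (n : ℕ) := TwoN n ⊕ Unit
/-- Column index type for prompts: `n + 1` (context columns plus the query column). -/
abbrev CIdx (n : ℕ) := Fin n ⊕ Unit

/-- The mask `M = [[I_n, 0],[0, 0]]`. -/
def maskM (n : ℕ) : Matrix (CIdx n) (CIdx n) ℝ := Matrix.fromBlocks 1 0 0 0

/-- One linear attention layer `Z ↦ Z + P̃ Z M (Zᵀ Q̃ Z)`. -/
def attnLayer (n : ℕ) (Pm Qm : Matrix (RIdx n) (RIdx n) ℝ)
    (Z : Matrix (RIdx n) (CIdx n) ℝ) : Matrix (RIdx n) (CIdx n) ℝ :=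
  Z + Pm * Z * maskM n * (Zᵀ * Qm * Z)

/-- `P̃ = [[0, 0],[u, 1]]`. -/
def Pmat (n : ℕ) (u : Matrix Unit (TwoN n) ℝ) : Matrix (RIdx n) (RIdx n) ℝ :=
  Matrix.fromBlocks 0 0 u 1

/-- `Q̃ = [[A, 0],[0, 0]]`. -/
def Qmat (n : ℕ) (A : Matrix (TwoN n) (TwoN n) ℝ) : Matrix (RIdx n) (RIdx n) ℝ :=
  Matrix.fromBlocks A 0 0 0

/-- `A^TD = [[-I, I],[0, 0]]`. -/
def Atd (n : ℕ) : Matrix (TwoN n) (TwoN n) ℝ := Matrix.fromBlocks (-1) 1 0 0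

/-- A row-stochastic matrix. -/
def RowStochastic {n : ℕ} (P : Matrix (Fin n) (Fin n) ℝ) : Prop :=
  (∀ i k, 0 ≤ P i k) ∧ ∀ i, ∑ k, P i k = 1

/-- TD iterates `w_0 = 0`, `w_{l+1} = r + γ P w_l`. -/
def tdW {n : ℕ} (γ : ℝ) (P : Matrix (Fin n) (Fin n) ℝ) (r : Fin n → ℝ) : ℕ → Fin n → ℝ
  | 0 => 0
  | l + 1 => r + γ • P.mulVec (tdW γ P r l)

/-- The value vector `v = (I - γ P)⁻¹ r`. -/
def valueV {n : ℕ} (γ : ℝ) (P : Matrix (Fin n) (Fin n) ℝ) (r : Fin n → ℝ) : Fin n → ℝ :=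
  ((1 : Matrix (Fin n) (Fin n) ℝ) - γ • P)⁻¹.mulVec r

/-- The prompt `Z_0(j)`: the `i`-th column is `(e_i, γ Pᵀ e_i, r_i)` and the query
column is `(e_j, 0, 0)`. -/
def prompt {n : ℕ} (γ : ℝ) (P : Matrix (Fin n) (Fin n) ℝ) (r : Fin n → ℝ) (j : Fin n) :
    Matrix (RIdx n) (CIdx n) ℝ := fun p q =>
  match p, q with
  | Sum.inl (Sum.inl k), Sum.inl i => if k = i then 1 else 0
  | Sum.inl (Sum.inr k), Sum.inl i => γ * P i k
  | Sum.inr _, Sum.inl i => r i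
  | Sum.inl (Sum.inl k), Sum.inr _ => if k = j then 1 else 0
  | Sum.inl (Sum.inr _), Sum.inr _ => 0
  | Sum.inr _, Sum.inr _ => 0

/-- Embeddings `Z_l` of the looped transformer with shared parameters `(A, u)`,
starting from the prompt `Z_0(j)`. -/
def embed {n : ℕ} (γ : ℝ) (P : Matrix (Fin n) (Fin n) ℝ) (r : Fin n → ℝ) (j : Fin n)
    (A : Matrix (TwoN n) (TwoN n) ℝ) (u : Matrix Unit (TwoN n) ℝ) :
    ℕ → Matrix (RIdx n) (CIdx n) ℝ
  | 0 => prompt γ P r j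
  | l + 1 => attnLayer n (Pmat n u) (Qmat n A) (embed γ P r j A u l)

/-- Looped `L`-layer transformer output `F_L^{(j)}(A, u) = -(Z_L)_{2n+1, n+1}`. -/
def tfOut {n : ℕ} (γ : ℝ) (P : Matrix (Fin n) (Fin n) ℝ) (r : Fin n → ℝ) (j : Fin n)
    (A : Matrix (TwoN n) (TwoN n) ℝ) (u : Matrix Unit (TwoN n) ℝ) (L : ℕ) : ℝ :=
  -(embed γ P r j A u L (Sum.inr ()) (Sum.inr ()))

/-- `TF_L(Z_0(j); θ_L^TD)`: the transformer output with the TD parameters. -/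
def tfTD {n : ℕ} (γ : ℝ) (P : Matrix (Fin n) (Fin n) ℝ) (r : Fin n → ℝ) (j : Fin n) (L : ℕ) : ℝ :=
  tfOut γ P r j (Atd n) 0 L

/-- `X ∈ ℝ^{2n×n}`: the `i`-th column is `(e_i, γ Pᵀ e_i)`. -/
def Xmat {n : ℕ} (γ : ℝ) (P : Matrix (Fin n) (Fin n) ℝ) : Matrix (TwoN n) (Fin n) ℝ :=
  fun p i => match p with
  | Sum.inl k => if k = i then 1 else 0
  | Sum.inr k => γ * P i k

/-- The query vector `x^q = (e_ω, 0) ∈ ℝ^{2n}`. -/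
def xqv {n : ℕ} (ω : Fin n) : TwoN n → ℝ := fun p =>
  match p with
  | Sum.inl k => if k = ω then 1 else 0
  | Sum.inr _ => 0

/-- Operator norm induced by the ℓ1 vector norm: maximum absolute column sum. -/
def matL1 {m k : Type*} [Fintype m] [Fintype k] (B : Matrix m k ℝ) : ℝ :=
  ⨆ j, ∑ i, |B i j|

/-- `G_0^{(i)} = 0`, `G_{l+1}^{(i)} = X (r - w_l) (X e_i)ᵀ + γ Σ_j P_{ij} G_l^{(j)}`. -/
def Gseq {n : ℕ} (γ : ℝ) (P : Matrix (Fin n) (Fin n) ℝ) (r : Fin n → ℝ) :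
    ℕ → Fin n → Matrix (TwoN n) (TwoN n) ℝ
  | 0 => fun _ => 0
  | l + 1 => fun i =>
      Matrix.vecMulVec ((Xmat γ P).mulVec (r - tdW γ P r l)) ((Xmat γ P).mulVec (Pi.single i 1))
        + γ • ∑ j, P i j • Gseq γ P r l j

/-- `H_0 = 0`, `H_{l+1} = H_l + X (r - w_l) (x^q)ᵀ - G_l^{(ω)}`. -/
def Hseq {n : ℕ} (γ : ℝ) (P : Matrix (Fin n) (Fin n) ℝ) (r : Fin n → ℝ) (ω : Fin n) :
    ℕ → Matrix (TwoN n) (TwoN n) ℝ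
  | 0 => 0
  | l + 1 => Hseq γ P r ω l
      + Matrix.vecMulVec ((Xmat γ P).mulVec (r - tdW γ P r l)) (xqv ω)
      - Gseq γ P r l ω

/-- `U_0 = 0`, `U_{l+1} = X Xᵀ A^TD X + γ U_l Pᵀ`. -/
def Useq {n : ℕ} (γ : ℝ) (P : Matrix (Fin n) (Fin n) ℝ) : ℕ → Matrix (TwoN n) (Fin n) ℝ
  | 0 => 0
  | l + 1 => Xmat γ P * (Xmat γ P)ᵀ * Atd n * Xmat γ P + γ • (Useq γ P l * Pᵀ)

/-- `h_0 = 0`, `h_{l+1} = h_l + X Xᵀ A^TD x^q + U_l Xᵀ A^TD x^q`. -/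
def hseq {n : ℕ} (γ : ℝ) (P : Matrix (Fin n) (Fin n) ℝ) (ω : Fin n) : ℕ → TwoN n → ℝ
  | 0 => 0
  | l + 1 => hseq γ P ω l
      + (Xmat γ P * (Xmat γ P)ᵀ * Atd n).mulVec (xqv ω)
      + (Useq γ P l * (Xmat γ P)ᵀ * Atd n).mulVec (xqv ω)

/-- `g_L(j)`: the vector of all partial derivatives of `F_L^{(j)}` with respect to the
entries of `A` and of `u`, evaluated at the TD parameters `(A^TD, 0)`. -/
def gvec {n : ℕ} (γ : ℝ) (P : Matrix (Fin n) (Fin n) ℝ) (r : Fin n → ℝ) (L : ℕ) (j : Fin n) :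
    (TwoN n × TwoN n) ⊕ TwoN n → ℝ
  | Sum.inl ab => deriv (fun t : ℝ =>
      tfOut γ P r j (Atd n + t • Matrix.single ab.1 ab.2 1) 0 L) 0
  | Sum.inr k => deriv (fun t : ℝ =>
      tfOut γ P r j (Atd n) (t • Matrix.single () k 1) L) 0

/-! With the TD parameters the first block row of `P̃` vanishes, so every layer changes only the
last row `(c, s)` of the embedding, by `c ↦ c + c (Xᵀ A^TD X) = c (γ Pᵀ)` and
`s ↦ s + c (Xᵀ A^TD x^q) = s - c_ω`. Starting from `(r, 0)`, after `l` layers the last row is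
`((γP)^l r, -w_l(ω))`, so the output of `L` layers is `w_L(ω)`. On the other hand
`v - w_L = (γP)^L v` because `v = r + γ P v`, and `‖γP‖_∞ ≤ γ` for the row-sum operator norm. -/

section TDParameters

variable {n : ℕ}

lemma attnLayer_Pmat_zero_fromBlocks (A : Matrix (TwoN n) (TwoN n) ℝ)
    (X : Matrix (TwoN n) (Fin n) ℝ) (Y : Matrix (TwoN n) Unit ℝ) (R : Matrix Unit (Fin n) ℝ)
    (s : Matrix Unit Unit ℝ) :
    attnLayer n (Pmat n 0) (Qmat n A) (fromBlocks X Y R s) =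
      fromBlocks X Y (R + R * (Xᵀ * A * X)) (s + R * (Xᵀ * A * Y)) := by
  simp [attnLayer, Pmat, Qmat, maskM, fromBlocks_transpose, fromBlocks_multiply, fromBlocks_add,
    Matrix.mul_assoc]

lemma Xmat_transpose_mul_Atd_mul_Xmat (γ : ℝ) (P : Matrix (Fin n) (Fin n) ℝ) :
    (Xmat γ P)ᵀ * Atd n * Xmat γ P = γ • Pᵀ - 1 := by
  ext i k
  simp [Matrix.mul_apply, Fintype.sum_sum_type, Xmat, Atd, fromBlocks, one_apply, neg_add_eq_sub]

lemma Xmat_transpose_mul_Atd_mul_xqv (γ : ℝ) (P : Matrix (Fin n) (Fin n) ℝ) (ω : Fin n) :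
    (Xmat γ P)ᵀ * Atd n * replicateCol Unit (xqv ω) = -replicateCol Unit (Pi.single ω 1) := by
  ext i k
  simp [Matrix.mul_apply, Fintype.sum_sum_type, Xmat, Atd, xqv, fromBlocks, one_apply, Pi.single_apply]

lemma prompt_eq_fromBlocks (γ : ℝ) (P : Matrix (Fin n) (Fin n) ℝ) (r : Fin n → ℝ) (ω : Fin n) :
    prompt γ P r ω =
      fromBlocks (Xmat γ P) (replicateCol Unit (xqv ω)) (replicateRow Unit r) 0 := by
  ext ((k | k) | _) (i | _) <;> rfl

lemma tdW_succ_eq_add (γ : ℝ) (P : Matrix (Fin n) (Fin n) ℝ) (r : Fin n → ℝ) (l : ℕ) :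
    tdW γ P r (l + 1) = tdW γ P r l + (γ • P) ^ l *ᵥ r := by
  induction l with
  | zero => simp [tdW]
  | succ l ih =>
    change r + γ • P *ᵥ tdW γ P r (l + 1) = tdW γ P r (l + 1) + _
    nth_rewrite 1 [ih]
    rw [mulVec_add, smul_add, ← add_assoc, pow_succ', ← mulVec_mulVec, smul_mulVec]
    rfl

lemma embed_Atd_zero (γ : ℝ) (P : Matrix (Fin n) (Fin n) ℝ) (r : Fin n → ℝ) (ω : Fin n) (l : ℕ) :
    embed γ P r ω (Atd n) 0 l =
      fromBlocks (Xmat γ P) (replicateCol Unit (xqv ω)) (replicateRow Unit ((γ • P) ^ l *ᵥ r))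
        (of fun _ _ => -tdW γ P r l ω) := by
  induction l with
  | zero =>
    rw [embed, prompt_eq_fromBlocks, pow_zero, one_mulVec]
    congr
    ext
    simp [tdW]
  | succ l ih =>
    rw [embed, ih, attnLayer_Pmat_zero_fromBlocks, Xmat_transpose_mul_Atd_mul_Xmat,
      Xmat_transpose_mul_Atd_mul_xqv, tdW_succ_eq_add]
    congr 1
    · rw [Matrix.mul_sub, Matrix.mul_one, add_sub_cancel, pow_succ', ← mulVec_mulVec,
        ← vecMul_transpose (γ • P), replicateRow_vecMul, transpose_smul]
    · ext
      simp [replicateRow_mul_replicateCol, add_comm]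

lemma tfTD_eq_tdW (γ : ℝ) (P : Matrix (Fin n) (Fin n) ℝ) (r : Fin n → ℝ) (ω : Fin n) (L : ℕ) :
    tfTD γ P r ω L = tdW γ P r L ω := by
  simp [tfTD, tfOut, embed_Atd_zero]

end TDParameters

section LinftyOpNorm

attribute [local instance] Matrix.linftyOpNormedAddCommGroup Matrix.linftyOpNormedRing
  Matrix.linftyOpNormedAlgebra

variable {n : ℕ} {γ : ℝ} {P : Matrix (Fin n) (Fin n) ℝ}

lemma RowStochastic.linfty_opNorm_le_one (hP : RowStochastic P) : ‖P‖ ≤ 1 := by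
  suffices ‖P‖₊ ≤ 1 from this
  rw [linfty_opNNNorm_def]
  refine Finset.sup_le fun i _ => le_of_eq (NNReal.eq ?_)
  simp [Real.norm_of_nonneg (hP.1 i _), hP.2 i]

lemma RowStochastic.linfty_opNorm_smul_le (hP : RowStochastic P) (hγ : 0 ≤ γ) :
    ‖γ • P‖ ≤ γ := by
  rw [norm_smul, Real.norm_of_nonneg hγ]
  exact mul_le_of_le_one_right hγ hP.linfty_opNorm_le_one

lemma RowStochastic.isUnit_one_sub_smul (hP : RowStochastic P) (hγ0 : 0 ≤ γ) (hγ1 : γ < 1) :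
    IsUnit (1 - γ • P) :=
  (Units.oneSub (γ • P) ((hP.linfty_opNorm_smul_le hγ0).trans_lt hγ1)).isUnit

lemma RowStochastic.norm_smul_pow_mulVec_le (hP : RowStochastic P) (hγ : 0 ≤ γ)
    (x : Fin n → ℝ) (L : ℕ) : ‖(γ • P) ^ L *ᵥ x‖ ≤ γ ^ L * ‖x‖ := by
  induction L generalizing x with
  | zero => simp
  | succ L ih =>
    have hstep : ‖(γ • P) *ᵥ x‖ ≤ γ * ‖x‖ :=
      (linfty_opNorm_mulVec _ x).trans
        (mul_le_mul_of_nonneg_right (hP.linfty_opNorm_smul_le hγ) (norm_nonneg x))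
    calc ‖(γ • P) ^ (L + 1) *ᵥ x‖ = ‖(γ • P) ^ L *ᵥ (γ • P) *ᵥ x‖ := by
          rw [pow_succ, mulVec_mulVec]
      _ ≤ γ ^ L * (γ * ‖x‖) := (ih _).trans (mul_le_mul_of_nonneg_left hstep (pow_nonneg hγ L))
      _ = γ ^ (L + 1) * ‖x‖ := by ring

end LinftyOpNorm

section ValueIteration

variable {n : ℕ} {γ : ℝ} {P : Matrix (Fin n) (Fin n) ℝ}

lemma valueV_eq_add_smul_mulVec (h : IsUnit (1 - γ • P)) (r : Fin n → ℝ) :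
    valueV γ P r = r + (γ • P) *ᵥ valueV γ P r := by
  have hv : (1 - γ • P) *ᵥ valueV γ P r = r := by
    rw [valueV, mulVec_mulVec, mul_nonsing_inv _ ((isUnit_iff_isUnit_det _).mp h), one_mulVec]
  rwa [sub_mulVec, one_mulVec, sub_eq_iff_eq_add] at hv

lemma valueV_sub_tdW (h : IsUnit (1 - γ • P)) (r : Fin n → ℝ) (L : ℕ) :
    valueV γ P r - tdW γ P r L = (γ • P) ^ L *ᵥ valueV γ P r := by
  induction L with
  | zero => simp [tdW]
  | succ L ih =>
    calc valueV γ P r - tdW γ P r (L + 1)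
        = (r + (γ • P) *ᵥ valueV γ P r) - (r + (γ • P) *ᵥ tdW γ P r L) := by
          rw [← valueV_eq_add_smul_mulVec h, tdW, smul_mulVec]
      _ = (γ • P) *ᵥ (valueV γ P r - tdW γ P r L) := by rw [mulVec_sub]; abel
      _ = (γ • P) ^ (L + 1) *ᵥ valueV γ P r := by rw [ih, mulVec_mulVec, pow_succ']

end ValueIteration

theorem stmt9_general (n : ℕ) (γ : ℝ) (hγ0 : 0 ≤ γ) (hγ1 : γ < 1)
    (P : Matrix (Fin n) (Fin n) ℝ) (hP : RowStochastic P) (r : Fin n → ℝ)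
    (L : ℕ) :
    ‖valueV γ P r - tdW γ P r L‖ ≤ γ ^ L * ‖valueV γ P r‖
    ∧ ∀ ω : Fin n, |valueV γ P r ω - tfTD γ P r ω L| ≤ γ ^ L * ‖valueV γ P r‖ := by
  have hbound : ‖valueV γ P r - tdW γ P r L‖ ≤ γ ^ L * ‖valueV γ P r‖ := by
    rw [valueV_sub_tdW (hP.isUnit_one_sub_smul hγ0 hγ1)]
    exact hP.norm_smul_pow_mulVec_le hγ0 _ L
  refine ⟨hbound, fun ω => ?_⟩
  rw [tfTD_eq_tdW, ← Real.norm_eq_abs]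
  exact (norm_le_pi_norm (valueV γ P r - tdW γ P r L) ω).trans hbound

/-- Lemma 4: `‖v - w_L‖_∞ ≤ γ^L ‖v‖_∞`, and in particular the difference
between the expected Monte Carlo return `v_ω` and the depth-L transformer output with
TD parameters is bounded by `γ^L ‖v‖_∞`. -/
theorem stmt9 (n : ℕ) (hn : 1 ≤ n) (γ : ℝ) (hγ0 : 0 ≤ γ) (hγ1 : γ < 1)
    (P : Matrix (Fin n) (Fin n) ℝ) (hP : RowStochastic P) (r : Fin n → ℝ)
    (L : ℕ) :
    ‖valueV γ P r - tdW γ P r L‖ ≤ γ ^ L * ‖valueV γ P r‖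
    ∧ ∀ ω : Fin n, |valueV γ P r ω - tfTD γ P r ω L| ≤ γ ^ L * ‖valueV γ P r‖ :=
  stmt9_general n γ hγ0 hγ1 P hP r L

end
end

section
/- For every l ≥ 0, the recursively defined matrices H_l (the layerwise gradients of the looped Transformer's query output with respect to the attention matrix A, evaluated at the TD parameters) satisfy ‖H_l‖_1 ≤ ((l² + l)/2) · β, where β = n(1+γ)² ‖v‖_∞ and ‖·‖_1 is the operator norm induced by the ℓ1 vector norm (maximum absolute column sum). -/
open Matrix Filter Topology

noncomputable section

/-!
Since `v = r + γ P v` and a row-stochastic `P` does not increase `‖·‖∞`, the TD error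
`v - w_l = (γ P)^l v` is small and `‖r - w_l‖∞ ≤ (1 + γ) ‖v‖∞`. Every column of `X` has
`ℓ¹`-mass `1 + γ`, so a rank-one term `X (r - w_l) yᵀ` with `|y_q| ≤ 1` has all column
`ℓ¹`-sums at most `β`. Column `ℓ¹`-sums are subadditive, so the recursion for `G_l^{(i)}`
(such a term plus `γ` times a convex combination of the `G_{l-1}^{(j)}`) keeps them below `l β`,
and each step `H_l ↦ H_{l+1}` adds at most `β + l β`; summing gives `(l² + l) / 2 · β`.
-/

namespace RowStochastic

variable {n : ℕ} {P : Matrix (Fin n) (Fin n) ℝ}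

theorem norm_mulVec_le (hP : RowStochastic P) (x : Fin n → ℝ) : ‖P *ᵥ x‖ ≤ ‖x‖ := by
  refine (pi_norm_le_iff_of_nonneg (norm_nonneg x)).2 fun i => ?_
  calc ‖(P *ᵥ x) i‖ = |∑ j, P i j * x j| := rfl
    _ ≤ ∑ j, |P i j * x j| := Finset.abs_sum_le_sum_abs _ _
    _ ≤ ∑ j, P i j * ‖x‖ := Finset.sum_le_sum fun j _ => by
        rw [abs_mul, abs_of_nonneg (hP.1 i j)]
        exact mul_le_mul_of_nonneg_left (norm_le_pi_norm x j) (hP.1 i j)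
    _ = ‖x‖ := by rw [← Finset.sum_mul, hP.2 i, one_mul]

theorem norm_smul_mulVec_le {γ : ℝ} (hP : RowStochastic P) (x : Fin n → ℝ) :
    ‖γ • P *ᵥ x‖ ≤ |γ| * ‖x‖ := by
  rw [norm_smul, Real.norm_eq_abs]
  exact mul_le_mul_of_nonneg_left (hP.norm_mulVec_le x) (abs_nonneg γ)

theorem isUnit_one_sub_smul_s11 {γ : ℝ} (hP : RowStochastic P) (hγ : |γ| < 1) :
    IsUnit (1 - γ • P) := by
  refine Matrix.mulVec_injective_iff_isUnit.1 fun x y hxy => ?_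
  set d := x - y
  have hd : d = γ • P *ᵥ d := by
    have : (1 - γ • P) *ᵥ d = 0 := by rw [mulVec_sub, hxy, sub_self]
    rwa [sub_mulVec, one_mulVec, smul_mulVec, sub_eq_zero] at this
  have : ‖d‖ ≤ |γ| * ‖d‖ := (congrArg norm hd).trans_le (hP.norm_smul_mulVec_le d)
  have : ‖d‖ = 0 := by nlinarith [norm_nonneg d]
  exact sub_eq_zero.1 (norm_eq_zero.1 this)

end RowStochastic

section TD

variable {n : ℕ} {γ : ℝ} {P : Matrix (Fin n) (Fin n) ℝ} {r : Fin n → ℝ}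

theorem valueV_eq (hP : RowStochastic P) (hγ : |γ| < 1) :
    valueV γ P r = r + γ • P *ᵥ valueV γ P r := by
  have hdet := (Matrix.isUnit_iff_isUnit_det _).1 (hP.isUnit_one_sub_smul_s11 hγ)
  have h : (1 - γ • P) *ᵥ valueV γ P r = r := by
    rw [valueV, mulVec_mulVec, mul_nonsing_inv _ hdet, one_mulVec]
  rw [sub_mulVec, one_mulVec, smul_mulVec] at h
  exact eq_add_of_sub_eq h

theorem norm_valueV_sub_tdW_le (hP : RowStochastic P) (hγ : |γ| < 1) (l : ℕ) :
    ‖valueV γ P r - tdW γ P r l‖ ≤ |γ| ^ l * ‖valueV γ P r‖ := by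
  induction l with
  | zero => simp [tdW]
  | succ l ih =>
    have hstep : valueV γ P r - tdW γ P r (l + 1) = γ • P *ᵥ (valueV γ P r - tdW γ P r l) := by
      conv_lhs => rw [valueV_eq hP hγ]
      rw [tdW, mulVec_sub, smul_sub, add_sub_add_left_eq_sub]
    calc ‖valueV γ P r - tdW γ P r (l + 1)‖
        ≤ |γ| * ‖valueV γ P r - tdW γ P r l‖ := hstep ▸ hP.norm_smul_mulVec_le _
      _ ≤ |γ| * (|γ| ^ l * ‖valueV γ P r‖) := mul_le_mul_of_nonneg_left ih (abs_nonneg γ)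
      _ = |γ| ^ (l + 1) * ‖valueV γ P r‖ := by ring

theorem norm_sub_tdW_le (hP : RowStochastic P) (hγ : |γ| < 1) (l : ℕ) :
    ‖r - tdW γ P r l‖ ≤ (1 + |γ|) * ‖valueV γ P r‖ := by
  have hsplit : r - tdW γ P r l = (valueV γ P r - tdW γ P r l) - γ • P *ᵥ valueV γ P r := by
    rw [sub_right_comm]
    exact congrArg (· - tdW γ P r l) (eq_sub_of_add_eq (valueV_eq hP hγ).symm)
  have hpow : |γ| ^ l ≤ 1 := pow_le_one₀ (abs_nonneg γ) hγ.le
  rw [hsplit]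
  calc _ ≤ ‖valueV γ P r - tdW γ P r l‖ + ‖γ • P *ᵥ valueV γ P r‖ := norm_sub_le _ _
    _ ≤ |γ| ^ l * ‖valueV γ P r‖ + |γ| * ‖valueV γ P r‖ :=
        add_le_add (norm_valueV_sub_tdW_le hP hγ l) (hP.norm_smul_mulVec_le _)
    _ ≤ (1 + |γ|) * ‖valueV γ P r‖ := by nlinarith [norm_nonneg (valueV γ P r)]

end TD

section ColumnSums

variable {m k : Type*} [Fintype m]

def colAbsSum (B : Matrix m k ℝ) (q : k) : ℝ := ∑ p, |B p q|

theorem colAbsSum_add_le (A B : Matrix m k ℝ) (q : k) :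
    colAbsSum (A + B) q ≤ colAbsSum A q + colAbsSum B q := by
  rw [colAbsSum, colAbsSum, colAbsSum, ← Finset.sum_add_distrib]
  exact Finset.sum_le_sum fun p _ => abs_add_le _ _

theorem colAbsSum_sub_le (A B : Matrix m k ℝ) (q : k) :
    colAbsSum (A - B) q ≤ colAbsSum A q + colAbsSum B q := by
  rw [colAbsSum, colAbsSum, colAbsSum, ← Finset.sum_add_distrib]
  exact Finset.sum_le_sum fun p _ => abs_sub _ _

theorem colAbsSum_smul (c : ℝ) (B : Matrix m k ℝ) (q : k) :
    colAbsSum (c • B) q = |c| * colAbsSum B q := by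
  simp only [colAbsSum, Matrix.smul_apply, smul_eq_mul, abs_mul, Finset.mul_sum]

theorem colAbsSum_sum_le {ι : Type*} [Fintype ι] (B : ι → Matrix m k ℝ) (q : k) :
    colAbsSum (∑ j, B j) q ≤ ∑ j, colAbsSum (B j) q := by
  simp only [colAbsSum, Matrix.sum_apply]
  rw [Finset.sum_comm]
  exact Finset.sum_le_sum fun p _ => Finset.abs_sum_le_sum_abs _ _

theorem colAbsSum_vecMulVec (x : m → ℝ) (y : k → ℝ) (q : k) :
    colAbsSum (vecMulVec x y) q = (∑ p, |x p|) * |y q| := by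
  simp only [colAbsSum, vecMulVec_apply, abs_mul, Finset.sum_mul]

theorem matL1_le_of_colAbsSum_le [Fintype k] {B : Matrix m k ℝ} {c : ℝ}
    (h : ∀ q, colAbsSum B q ≤ c) (hc : 0 ≤ c) : matL1 B ≤ c :=
  Real.iSup_le h hc

theorem sum_abs_mulVec_le [Fintype k] (M : Matrix m k ℝ) (y : k → ℝ) :
    ∑ p, |(M *ᵥ y) p| ≤ (∑ p, ∑ i, |M p i|) * ‖y‖ := by
  rw [Finset.sum_mul]
  refine Finset.sum_le_sum fun p _ => ?_
  calc |∑ i, M p i * y i| ≤ ∑ i, |M p i * y i| := Finset.abs_sum_le_sum_abs _ _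
    _ ≤ ∑ i, |M p i| * ‖y‖ := Finset.sum_le_sum fun i _ => by
        rw [abs_mul]
        exact mul_le_mul_of_nonneg_left (norm_le_pi_norm y i) (abs_nonneg _)
    _ = (∑ i, |M p i|) * ‖y‖ := (Finset.sum_mul _ _ _).symm

end ColumnSums

section TDGradient

variable {n : ℕ} {γ : ℝ} {P : Matrix (Fin n) (Fin n) ℝ} {r : Fin n → ℝ}

def tdBeta (γ : ℝ) (P : Matrix (Fin n) (Fin n) ℝ) (r : Fin n → ℝ) : ℝ :=
  n * (1 + γ) ^ 2 * ‖valueV γ P r‖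

theorem tdBeta_nonneg : 0 ≤ tdBeta γ P r := by
  unfold tdBeta; positivity

theorem abs_xqv_le_one (ω : Fin n) (p : TwoN n) : |xqv ω p| ≤ 1 := by
  rcases p with k | k
  · simp only [xqv]; split_ifs <;> simp
  · simp [xqv]

theorem abs_Xmat_le_one (hγ0 : 0 ≤ γ) (hγ1 : γ ≤ 1) (hP : RowStochastic P)
    (p : TwoN n) (i : Fin n) : |Xmat γ P p i| ≤ 1 := by
  rcases p with k | k
  · simp only [Xmat]; split_ifs <;> simp
  · have hPik : P i k ≤ 1 := hP.2 i ▸ Finset.single_le_sum (fun j _ => hP.1 i j) (Finset.mem_univ k)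
    simp only [Xmat, abs_of_nonneg (mul_nonneg hγ0 (hP.1 i k))]
    nlinarith [hP.1 i k]

theorem sum_abs_Xmat (hγ0 : 0 ≤ γ) (hP : RowStochastic P) :
    ∑ p, ∑ i, |Xmat γ P p i| = n * (1 + γ) := by
  have hcol : ∀ i, ∑ p, |Xmat γ P p i| = 1 + γ := fun i => by
    simp only [Fintype.sum_sum_type, Xmat, apply_ite abs, abs_one, abs_zero,
      Finset.sum_ite_eq', Finset.mem_univ, if_true,
      abs_of_nonneg (mul_nonneg hγ0 (hP.1 i _)), ← Finset.mul_sum, hP.2 i, mul_one]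
  rw [Finset.sum_comm, Finset.sum_congr rfl fun i _ => hcol i]
  simp [mul_add]

theorem sum_abs_Xmat_mulVec_sub_tdW_le (hγ0 : 0 ≤ γ) (hγ1 : γ < 1) (hP : RowStochastic P)
    (l : ℕ) : ∑ p, |(Xmat γ P *ᵥ (r - tdW γ P r l)) p| ≤ tdBeta γ P r := by
  have hγ : |γ| < 1 := by rwa [abs_of_nonneg hγ0]
  calc _ ≤ (n * (1 + γ)) * ‖r - tdW γ P r l‖ := sum_abs_Xmat hγ0 hP ▸ sum_abs_mulVec_le _ _
    _ ≤ (n * (1 + γ)) * ((1 + γ) * ‖valueV γ P r‖) := by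
        gcongr
        simpa only [abs_of_nonneg hγ0] using norm_sub_tdW_le hP hγ l
    _ = tdBeta γ P r := by unfold tdBeta; ring

theorem colAbsSum_Gseq_le (hγ0 : 0 ≤ γ) (hγ1 : γ < 1) (hP : RowStochastic P) (l : ℕ)
    (i : Fin n) (q : TwoN n) : colAbsSum (Gseq γ P r l i) q ≤ l * tdBeta γ P r := by
  induction l generalizing i with
  | zero => simp [Gseq, colAbsSum]
  | succ l ih =>
    have hβ := tdBeta_nonneg (γ := γ) (P := P) (r := r)
    have hrank_one : colAbsSum (vecMulVec (Xmat γ P *ᵥ (r - tdW γ P r l))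
        (Xmat γ P *ᵥ Pi.single i 1)) q ≤ tdBeta γ P r := by
      rw [colAbsSum_vecMulVec, mulVec_single_one, ← mul_one (tdBeta γ P r)]
      exact mul_le_mul (sum_abs_Xmat_mulVec_sub_tdW_le hγ0 hγ1 hP l)
        (abs_Xmat_le_one hγ0 hγ1.le hP q i) (abs_nonneg _) hβ
    have hmix : colAbsSum (∑ j, P i j • Gseq γ P r l j) q ≤ l * tdBeta γ P r :=
      calc _ ≤ ∑ j, colAbsSum (P i j • Gseq γ P r l j) q := colAbsSum_sum_le _ q
        _ = ∑ j, P i j * colAbsSum (Gseq γ P r l j) q := by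
            simp only [colAbsSum_smul, abs_of_nonneg (hP.1 i _)]
        _ ≤ ∑ j, P i j * (l * tdBeta γ P r) := by gcongr with j; exacts [hP.1 i j, ih j]
        _ = l * tdBeta γ P r := by rw [← Finset.sum_mul, hP.2 i, one_mul]
    calc colAbsSum (Gseq γ P r (l + 1) i) q
        ≤ tdBeta γ P r + γ * (l * tdBeta γ P r) := by
          refine (colAbsSum_add_le _ _ q).trans (add_le_add hrank_one ?_)
          rw [colAbsSum_smul, abs_of_nonneg hγ0]
          exact mul_le_mul_of_nonneg_left hmix hγ0
      _ ≤ (l + 1 : ℕ) * tdBeta γ P r := by push_cast; nlinarith [mul_nonneg (Nat.cast_nonneg l) hβ]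

theorem colAbsSum_Hseq_le (hγ0 : 0 ≤ γ) (hγ1 : γ < 1) (hP : RowStochastic P) (ω : Fin n)
    (l : ℕ) (q : TwoN n) :
    colAbsSum (Hseq γ P r ω l) q ≤ (((l : ℝ) ^ 2 + l) / 2) * tdBeta γ P r := by
  induction l with
  | zero => simp [Hseq, colAbsSum]
  | succ l ih =>
    have hrank_one : colAbsSum (vecMulVec (Xmat γ P *ᵥ (r - tdW γ P r l)) (xqv ω)) q
        ≤ tdBeta γ P r := by
      rw [colAbsSum_vecMulVec, ← mul_one (tdBeta γ P r)]
      exact mul_le_mul (sum_abs_Xmat_mulVec_sub_tdW_le hγ0 hγ1 hP l) (abs_xqv_le_one ω q)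
        (abs_nonneg _) tdBeta_nonneg
    calc colAbsSum (Hseq γ P r ω (l + 1)) q
        ≤ (((l : ℝ) ^ 2 + l) / 2) * tdBeta γ P r + tdBeta γ P r + l * tdBeta γ P r :=
          (colAbsSum_sub_le _ _ q).trans <| add_le_add
            ((colAbsSum_add_le _ _ q).trans (add_le_add ih hrank_one))
            (colAbsSum_Gseq_le hγ0 hγ1 hP l ω q)
      _ = ((((l + 1 : ℕ) : ℝ) ^ 2 + (l + 1 : ℕ)) / 2) * tdBeta γ P r := by push_cast; ring

end TDGradient

theorem stmt11_general (n : ℕ) (γ : ℝ) (hγ0 : 0 ≤ γ) (hγ1 : γ < 1)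
    (P : Matrix (Fin n) (Fin n) ℝ) (hP : RowStochastic P) (r : Fin n → ℝ)
    (ω : Fin n) (l : ℕ) :
    matL1 (Hseq γ P r ω l) ≤ (((l : ℝ) ^ 2 + l) / 2) * ((n : ℝ) * (1 + γ) ^ 2 * ‖valueV γ P r‖) :=
  matL1_le_of_colAbsSum_le (colAbsSum_Hseq_le hγ0 hγ1 hP ω l) (by positivity)

/-- `‖H_l‖_1 ≤ ((l² + l)/2) β` with `β = n (1+γ)² ‖v‖_∞`. -/
theorem stmt11 (n : ℕ) (hn : 1 ≤ n) (γ : ℝ) (hγ0 : 0 ≤ γ) (hγ1 : γ < 1)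
    (P : Matrix (Fin n) (Fin n) ℝ) (hP : RowStochastic P) (r : Fin n → ℝ)
    (ω : Fin n) (l : ℕ) :
    matL1 (Hseq γ P r ω l) ≤ (((l : ℝ) ^ 2 + l) / 2) * ((n : ℝ) * (1 + γ) ^ 2 * ‖valueV γ P r‖) :=
  stmt11_general n γ hγ0 hγ1 P hP r ω l

end
end

section
/- For every l ≥ 0, the recursively defined vectors h_l (the layerwise gradients of the looped Transformer's query output with respect to the row-vector parameter u, evaluated at the TD parameters) satisfy ‖h_l‖_1 ≤ ((l² + l)/2)(1+γ)² + l(1+γ), where ‖h_l‖_1 is the sum of absolute entries of h_l. -/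
open Matrix Filter Topology

noncomputable section

/-! Since `Xᵀ A^TD x^q = -e_ω`, the recursion is `h_{l+1} = h_l - X e_ω - U_l e_ω`, and everything
is controlled by maximal absolute column sums, which are submultiplicative. The columns of `X` have
ℓ¹-norm `1 + γ`, `Xᵀ A^TD X = -I + γ Pᵀ` has column sums at most `1 + γ`, and right multiplication by
`Pᵀ` does not increase them because `P` is row-stochastic. Hence the columns of `U_l` have ℓ¹-norm
at most `l (1 + γ)²`, and summing the increments of `h` gives the bound. -/

section ColumnL1

variable {m k o : Type*} [Fintype m] [Fintype k]

theorem sum_abs_add_le (u v : m → ℝ) : ∑ i, |(u + v) i| ≤ ∑ i, |u i| + ∑ i, |v i| := by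
  rw [← Finset.sum_add_distrib]
  exact Finset.sum_le_sum fun i _ => abs_add_le _ _

theorem sum_abs_sub_le (u v : m → ℝ) : ∑ i, |(u - v) i| ≤ ∑ i, |u i| + ∑ i, |v i| := by
  rw [← Finset.sum_add_distrib]
  exact Finset.sum_le_sum fun i _ => abs_sub _ _

theorem sum_abs_mulVec_le_s13 {B : Matrix m k ℝ} {b : ℝ} (hB : ∀ j, ∑ i, |B i j| ≤ b)
    (v : k → ℝ) : ∑ i, |(B *ᵥ v) i| ≤ b * ∑ j, |v j| :=
  calc ∑ i, |(B *ᵥ v) i| ≤ ∑ i, ∑ j, |B i j| * |v j| := by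
        gcongr with i
        exact (Finset.abs_sum_le_sum_abs (fun j => B i j * v j) _).trans_eq (by simp only [abs_mul])
    _ = ∑ j, (∑ i, |B i j|) * |v j| := by
        rw [Finset.sum_comm]; simp only [Finset.sum_mul]
    _ ≤ ∑ j, b * |v j| := by gcongr with j; exact hB j
    _ = b * ∑ j, |v j| := by rw [Finset.mul_sum]

theorem sum_abs_mul_apply_le [Fintype o] {B : Matrix m k ℝ} {C : Matrix k o ℝ} {b c : ℝ}
    (hb : 0 ≤ b) (hB : ∀ j, ∑ i, |B i j| ≤ b) (hC : ∀ j, ∑ i, |C i j| ≤ c) (j : o) :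
    ∑ i, |(B * C) i j| ≤ b * c :=
  calc ∑ i, |(B * C) i j| = ∑ i, |(B *ᵥ fun l => C l j) i| := rfl
    _ ≤ b * ∑ l, |C l j| := sum_abs_mulVec_le_s13 hB _
    _ ≤ b * c := by gcongr; exact hC j

end ColumnL1

section TD

variable {n : ℕ} (γ : ℝ) (P : Matrix (Fin n) (Fin n) ℝ)

theorem Xmat_eq_fromRows : Xmat γ P = fromRows 1 (γ • Pᵀ) := by
  ext (k | k) i <;> simp [Xmat, one_apply]

theorem Xmat_transpose_mul_Atd : (Xmat γ P)ᵀ * Atd n = fromCols (-1) 1 := by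
  simp [Xmat_eq_fromRows, transpose_fromRows, Atd, fromCols_mul_fromBlocks]

theorem Xmat_transpose_mul_Atd_mulVec_xqv (ω : Fin n) :
    ((Xmat γ P)ᵀ * Atd n) *ᵥ xqv ω = -Pi.single ω 1 := by
  have hxq : xqv ω = Sum.elim (Pi.single ω 1) 0 := by
    ext (k | k) <;> simp [xqv, Pi.single_apply]
  rw [Xmat_transpose_mul_Atd, hxq, fromCols_mulVec_sumElim]
  ext k
  simp [one_apply, Pi.single_apply]

theorem Useq_succ (l : ℕ) :
    Useq γ P (l + 1) = Xmat γ P * (-1 + γ • Pᵀ) + γ • (Useq γ P l * Pᵀ) := by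
  rw [Useq, Matrix.mul_assoc, Matrix.mul_assoc, ← Matrix.mul_assoc _ (Atd n),
    Xmat_transpose_mul_Atd, Xmat_eq_fromRows, fromCols_mul_fromRows]
  simp

theorem hseq_succ (ω : Fin n) (l : ℕ) :
    hseq γ P ω (l + 1) =
      hseq γ P ω l - Xmat γ P *ᵥ Pi.single ω 1 - Useq γ P l *ᵥ Pi.single ω 1 := by
  rw [hseq, Matrix.mul_assoc (Xmat γ P), Matrix.mul_assoc (Useq γ P l),
    ← mulVec_mulVec (M := Xmat γ P), ← mulVec_mulVec (M := Useq γ P l),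
    Xmat_transpose_mul_Atd_mulVec_xqv, mulVec_neg, mulVec_neg, sub_eq_add_neg, sub_eq_add_neg]

variable {γ P}

theorem RowStochastic.sum_abs_transpose_apply (hP : RowStochastic P) (j : Fin n) :
    ∑ i, |Pᵀ i j| = 1 := by
  simp [abs_of_nonneg (hP.1 j _), hP.2 j]

theorem sum_abs_Xmat_apply (hγ : 0 ≤ γ) (hP : RowStochastic P) (i : Fin n) :
    ∑ p, |Xmat γ P p i| = 1 + γ := by
  simp [Xmat_eq_fromRows, Fintype.sum_sum_type, one_apply, apply_ite abs, abs_mul,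
    abs_of_nonneg hγ, abs_of_nonneg (hP.1 i _), ← Finset.mul_sum, hP.2 i]

theorem sum_abs_neg_one_add_smul_transpose_apply (hγ : 0 ≤ γ) (hP : RowStochastic P)
    (j : Fin n) : ∑ i, |(-1 + γ • Pᵀ) i j| ≤ 1 + γ :=
  calc ∑ i, |(-1 + γ • Pᵀ) i j| ≤ ∑ i, |-(1 : Matrix (Fin n) (Fin n) ℝ) i j| + ∑ i, |γ * Pᵀ i j| :=
        sum_abs_add_le (fun i => -(1 : Matrix (Fin n) (Fin n) ℝ) i j) fun i => γ * Pᵀ i j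
    _ = 1 + γ := by
        simp only [abs_neg, abs_mul, abs_of_nonneg hγ, ← Finset.mul_sum,
          hP.sum_abs_transpose_apply, mul_one]
        simp [one_apply, apply_ite abs]

theorem sum_abs_Useq_apply_le (hγ0 : 0 ≤ γ) (hγ1 : γ ≤ 1) (hP : RowStochastic P) (l : ℕ)
    (j : Fin n) : ∑ p, |Useq γ P l p j| ≤ l * (1 + γ) ^ 2 := by
  induction l generalizing j with
  | zero => simp [Useq]
  | succ l ih =>
    calc ∑ p, |Useq γ P (l + 1) p j|
        ≤ ∑ p, |(Xmat γ P * (-1 + γ • Pᵀ) : Matrix (TwoN n) (Fin n) ℝ) p j|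
            + ∑ p, |γ * (Useq γ P l * Pᵀ) p j| := by
          rw [Useq_succ]
          exact sum_abs_add_le _ _
      _ ≤ (1 + γ) * (1 + γ) + γ * (l * (1 + γ) ^ 2 * 1) := by
          simp only [abs_mul, abs_of_nonneg hγ0, ← Finset.mul_sum]
          gcongr
          · exact sum_abs_mul_apply_le (by linarith) (fun i => (sum_abs_Xmat_apply hγ0 hP i).le)
              (sum_abs_neg_one_add_smul_transpose_apply hγ0 hP) j
          · exact sum_abs_mul_apply_le (by positivity) ih
              (fun i => (hP.sum_abs_transpose_apply i).le) j
      _ ≤ (l + 1 : ℕ) * (1 + γ) ^ 2 := by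
          push_cast
          linarith [mul_nonneg (mul_nonneg (sub_nonneg.2 hγ1) l.cast_nonneg) (sq_nonneg (1 + γ))]

end TD

theorem stmt13_general (n : ℕ) (γ : ℝ) (hγ0 : 0 ≤ γ) (hγ1 : γ < 1)
    (P : Matrix (Fin n) (Fin n) ℝ) (hP : RowStochastic P)
    (ω : Fin n) (l : ℕ) :
    ∑ i, |hseq γ P ω l i| ≤ (((l : ℝ) ^ 2 + l) / 2) * (1 + γ) ^ 2 + (l : ℝ) * (1 + γ) := by
  have hsingle : ∑ i, |(Pi.single ω 1 : Fin n → ℝ) i| = 1 := by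
    simp [Pi.single_apply, apply_ite abs]
  induction l with
  | zero => simp [hseq]
  | succ l ih =>
    have hX := sum_abs_mulVec_le_s13 (fun i => (sum_abs_Xmat_apply hγ0 hP i).le) (Pi.single ω 1)
    have hU := sum_abs_mulVec_le_s13 (sum_abs_Useq_apply_le hγ0 hγ1.le hP l) (Pi.single ω 1)
    rw [hsingle, mul_one] at hX hU
    calc ∑ i, |hseq γ P ω (l + 1) i|
        ≤ ∑ i, |hseq γ P ω l i| + ∑ i, |(Xmat γ P *ᵥ Pi.single ω 1) i|
            + ∑ i, |(Useq γ P l *ᵥ Pi.single ω 1) i| := by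
          rw [hseq_succ]
          exact (sum_abs_sub_le _ _).trans (by gcongr; exact sum_abs_sub_le _ _)
      _ ≤ ((l ^ 2 + l) / 2 * (1 + γ) ^ 2 + l * (1 + γ)) + (1 + γ) + l * (1 + γ) ^ 2 := by
          gcongr
      _ ≤ (((l + 1 : ℕ) : ℝ) ^ 2 + (l + 1 : ℕ)) / 2 * (1 + γ) ^ 2 + (l + 1 : ℕ) * (1 + γ) := by
          push_cast
          linarith [sq_nonneg (1 + γ)]

/-- `‖h_l‖_1 ≤ ((l² + l)/2)(1+γ)² + l(1+γ)`. -/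
theorem stmt13 (n : ℕ) (hn : 1 ≤ n) (γ : ℝ) (hγ0 : 0 ≤ γ) (hγ1 : γ < 1)
    (P : Matrix (Fin n) (Fin n) ℝ) (hP : RowStochastic P) (r : Fin n → ℝ)
    (ω : Fin n) (l : ℕ) :
    ∑ i, |hseq γ P ω l i| ≤ (((l : ℝ) ^ 2 + l) / 2) * (1 + γ) ^ 2 + (l : ℝ) * (1 + γ) :=
  stmt13_general n γ hγ0 hγ1 P hP ω l

end
end
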